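/- arXiv:1104.5128 — 3 statements merged into one kernel-verified Lean document; each statement's English description precedes it below -/
import Mathlib

section
/- Let n ≥ 2, a ≥ 1, let D ⊊ ℝⁿ be a domain, D' ⊊ ℝⁿ a c-uniform domain (c ≥ 1), and f : D → D' an (M,C)-CQH homeomorphism (M ≥ 1, C ≥ 0). Let β be a rectifiable arc in D satisfying ℓ_k(β[s₁,s₂]) ≤ 4a²·k_D(s₁,s₂) + 4a² for all s₁, s₂ ∈ β. Let p, q ∈ β with q following p along β, and suppose d'(f(q)) = 2·d'(f(p)) and d'(f(z)) ≤ 2·d'(f(p)) for every z ∈ β[p,q]. Then there exists a₂ > 0, depending only on a, c, M, C, such that for every z ∈ β[p,q]: (1) d'(f(q)) ≤ a₂·d'(f(z)); (2) |f(q) − f(p)| ≤ a₂·d'(f(z)); (3) max{|f(p) − f(z)|, |f(q) − f(z)|} ≤ a₂·d'(f(z)). (This is Lemma 3.2.) -/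
open Set Metric MeasureTheory

noncomputable section

/-- Distance from a point to the boundary of `D`, i.e. to its complement. -/
def distBd {n : ℕ} (D : Set (EuclideanSpace ℝ (Fin n))) (z : EuclideanSpace ℝ (Fin n)) : ℝ :=
  infDist z Dᶜ

/-- A domain in ℝⁿ: a nonempty, open, connected, proper subset. -/
def IsProperDomain {n : ℕ} (D : Set (EuclideanSpace ℝ (Fin n))) : Prop :=
  IsOpen D ∧ IsConnected D ∧ D ≠ univ

/-- A rectifiable arc in `D`, parametrized by arclength on `[0, len]`:
the length of the subarc between parameters `s ≤ t` is exactly `t - s`. -/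
structure Arc (n : ℕ) (D : Set (EuclideanSpace ℝ (Fin n))) where
  len : ℝ
  len_nonneg : 0 ≤ len
  toFun : ℝ → EuclideanSpace ℝ (Fin n)
  injOn : InjOn toFun (Icc 0 len)
  mem : ∀ t ∈ Icc 0 len, toFun t ∈ D
  unitSpeed : ∀ s ∈ Icc 0 len, ∀ t ∈ Icc 0 len, s ≤ t →
    eVariationOn toFun (Icc s t) = ENNReal.ofReal (t - s)

namespace Arc

variable {n : ℕ} {D : Set (EuclideanSpace ℝ (Fin n))}

/-- The arc `γ` joins `x` to `y`. -/
def Joins (γ : Arc n D) (x y : EuclideanSpace ℝ (Fin n)) : Prop :=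
  γ.toFun 0 = x ∧ γ.toFun γ.len = y

/-- Quasihyperbolic length of the subarc of `γ` between parameters `u` and `v`:
`∫ |dz| / d(z)` along the (unit-speed) subarc. -/
def qhLen (γ : Arc n D) (u v : ℝ) : ℝ :=
  ∫ t in u..v, 1 / distBd D (γ.toFun t)

end Arc

/-- Quasihyperbolic distance in `D`. -/
def qhDist {n : ℕ} (D : Set (EuclideanSpace ℝ (Fin n))) (x y : EuclideanSpace ℝ (Fin n)) : ℝ :=
  sInf { r | ∃ γ : Arc n D, γ.Joins x y ∧ r = γ.qhLen 0 γ.len }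

/-- Inner (internal) distance in `D`: infimum of lengths of arcs joining the two points. -/
def innerDist {n : ℕ} (D : Set (EuclideanSpace ℝ (Fin n))) (x y : EuclideanSpace ℝ (Fin n)) : ℝ :=
  sInf { r | ∃ γ : Arc n D, γ.Joins x y ∧ r = γ.len }

namespace Arc

variable {n : ℕ} {D : Set (EuclideanSpace ℝ (Fin n))}

/-- `γ` is a quasihyperbolic geodesic: its quasihyperbolic length realizes the
quasihyperbolic distance between its endpoints. -/
def IsGeodesic (γ : Arc n D) : Prop :=
  γ.qhLen 0 γ.len = qhDist D (γ.toFun 0) (γ.toFun γ.len)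

/-- `γ` is a `c`-cone arc: `min (ℓ(γ[z₁,z]), ℓ(γ[z₂,z])) ≤ c·d(z)` for all `z ∈ γ`. -/
def IsConeArc (γ : Arc n D) (c : ℝ) : Prop :=
  ∀ t ∈ Icc 0 γ.len, min t (γ.len - t) ≤ c * distBd D (γ.toFun t)

end Arc

/-- `D` is an `a`-John domain. -/
def IsJohn {n : ℕ} (D : Set (EuclideanSpace ℝ (Fin n))) (a : ℝ) : Prop :=
  ∀ x ∈ D, ∀ y ∈ D, ∃ γ : Arc n D, γ.Joins x y ∧ γ.IsConeArc a

/-- `D` is a `c`-uniform domain. -/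
def IsUniform {n : ℕ} (D : Set (EuclideanSpace ℝ (Fin n))) (c : ℝ) : Prop :=
  ∀ x ∈ D, ∀ y ∈ D, ∃ γ : Arc n D, γ.Joins x y ∧ γ.IsConeArc c ∧ γ.len ≤ c * dist x y

/-- `f : D → D'` is an `(M,C)`-CQH homeomorphism (a homeomorphism of `D` onto `D'`
satisfying the coarse quasihyperbolic bi-Lipschitz condition). -/
def IsCQH {n : ℕ} (D D' : Set (EuclideanSpace ℝ (Fin n)))
    (f : EuclideanSpace ℝ (Fin n) → EuclideanSpace ℝ (Fin n)) (M C : ℝ) : Prop :=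
  ContinuousOn f D ∧ BijOn f D D' ∧
  ∀ x ∈ D, ∀ y ∈ D,
    (qhDist D x y - C) / M ≤ qhDist D' (f x) (f y) ∧
    qhDist D' (f x) (f y) ≤ M * qhDist D x y + C

/-!
Put `d₀ = d'(f p)`. On `β[p, q]` the image stays within `2 d₀` of `∂D'`, so by
`log (1 + |x - y| / d(x)) ≤ k(x, y)` every piece of `β[p, q]` of quasihyperbolic length `≤ 1`
is mapped to a set of diameter `O(d₀)`, and chaining such pieces gives
`|f p - f q| ≤ (ℓ_k(β[p, q]) + 1) · O(d₀)`. The quasigeodesic inequality for `β` and the CQH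
condition bound `ℓ_k(β[p, q])` linearly by `k_{D'}(f p, f q)`, which the uniformity of `D'`
bounds by `O(log (1 + c |f p - f q| / d₀))`. So `ρ = |f p - f q| / d₀` satisfies
`ρ ≤ P + Q log (1 + c ρ)`, which forces `ρ` and then `ℓ_k(β[p, q])` to be bounded; one more
application of the logarithmic estimate compares `f p`, `f q` with `d'(f z)`.
-/

section

variable {n : ℕ} {D D' : Set (EuclideanSpace ℝ (Fin n))}

lemma distBd_pos (hDo : IsOpen D) (hDu : D ≠ univ) {z : EuclideanSpace ℝ (Fin n)} (hz : z ∈ D) :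
    0 < distBd D z :=
  (hDo.isClosed_compl.notMem_iff_infDist_pos (nonempty_compl.mpr hDu)).mp (not_not_intro hz)

lemma distBd_le_add_dist (x y : EuclideanSpace ℝ (Fin n)) :
    distBd D x ≤ distBd D y + dist x y :=
  infDist_le_infDist_add_dist

namespace Arc

lemma dist_le_sub (γ : Arc n D) {s t : ℝ} (hs : s ∈ Icc 0 γ.len) (ht : t ∈ Icc 0 γ.len)
    (hst : s ≤ t) : dist (γ.toFun s) (γ.toFun t) ≤ t - s := by
  have h := eVariationOn.edist_le γ.toFun (left_mem_Icc.mpr hst) (right_mem_Icc.mpr hst)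
  rw [γ.unitSpeed s hs t ht hst] at h
  exact (edist_le_ofReal (sub_nonneg.mpr hst)).mp h

lemma lipschitzOnWith (γ : Arc n D) : LipschitzOnWith 1 γ.toFun (Icc 0 γ.len) := by
  refine LipschitzOnWith.of_dist_le_mul fun s hs t ht => ?_
  rw [NNReal.coe_one, one_mul, Real.dist_eq]
  rcases le_total s t with hst | hts
  · rw [abs_sub_comm, abs_of_nonneg (sub_nonneg.mpr hst)]
    exact γ.dist_le_sub hs ht hst
  · rw [dist_comm, abs_of_nonneg (sub_nonneg.mpr hts)]
    exact γ.dist_le_sub ht hs hts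

lemma continuousOn_one_div_distBd (hDo : IsOpen D) (hDu : D ≠ univ) (γ : Arc n D) :
    ContinuousOn (fun t => 1 / distBd D (γ.toFun t)) (Icc 0 γ.len) :=
  continuousOn_const.div
    ((continuous_infDist_pt _).comp_continuousOn γ.lipschitzOnWith.continuousOn)
    fun t ht => (distBd_pos hDo hDu (γ.mem t ht)).ne'

lemma intervalIntegrable_one_div_distBd (hDo : IsOpen D) (hDu : D ≠ univ) (γ : Arc n D)
    {u v : ℝ} (hu : u ∈ Icc 0 γ.len) (hv : v ∈ Icc 0 γ.len) :
    IntervalIntegrable (fun t => 1 / distBd D (γ.toFun t)) volume u v :=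
  ((γ.continuousOn_one_div_distBd hDo hDu).mono (uIcc_subset_Icc hu hv)).intervalIntegrable

lemma qhLen_nonneg (γ : Arc n D) {u v : ℝ} (h : u ≤ v) : 0 ≤ γ.qhLen u v :=
  intervalIntegral.integral_nonneg h fun _ _ => one_div_nonneg.mpr infDist_nonneg

lemma qhLen_add (hDo : IsOpen D) (hDu : D ≠ univ) (γ : Arc n D) {u v w : ℝ}
    (hu : u ∈ Icc 0 γ.len) (hv : v ∈ Icc 0 γ.len) (hw : w ∈ Icc 0 γ.len) :
    γ.qhLen u v + γ.qhLen v w = γ.qhLen u w :=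
  intervalIntegral.integral_add_adjacent_intervals
    (γ.intervalIntegrable_one_div_distBd hDo hDu hu hv)
    (γ.intervalIntegrable_one_div_distBd hDo hDu hv hw)

lemma qhLen_le_of_Icc_subset (hDo : IsOpen D) (hDu : D ≠ univ) (γ : Arc n D) {u v s t : ℝ}
    (hu : u ∈ Icc 0 γ.len) (hv : v ∈ Icc 0 γ.len) (hus : u ≤ s) (hst : s ≤ t) (htv : t ≤ v) :
    γ.qhLen s t ≤ γ.qhLen u v := by
  have hs : s ∈ Icc 0 γ.len := ⟨hu.1.trans hus, (hst.trans htv).trans hv.2⟩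
  have ht : t ∈ Icc 0 γ.len := ⟨hu.1.trans (hus.trans hst), htv.trans hv.2⟩
  rw [← γ.qhLen_add hDo hDu hu hs hv, ← γ.qhLen_add hDo hDu hs ht hv]
  linarith [γ.qhLen_nonneg hus, γ.qhLen_nonneg htv]

lemma continuousOn_qhLen (hDo : IsOpen D) (hDu : D ≠ univ) (γ : Arc n D) {u v : ℝ}
    (hu : u ∈ Icc 0 γ.len) (hv : v ∈ Icc 0 γ.len) (huv : u ≤ v) :
    ContinuousOn (γ.qhLen u) (Icc u v) := by
  have h := intervalIntegral.continuousOn_primitive_interval (a := u) (b := v) (μ := volume)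
    (((γ.continuousOn_one_div_distBd hDo hDu).mono (uIcc_subset_Icc hu hv)).integrableOn_compact
      isCompact_uIcc)
  rwa [uIcc_of_le huv] at h

def subarc (γ : Arc n D) {s t : ℝ} (hs : s ∈ Icc 0 γ.len) (ht : t ∈ Icc 0 γ.len) (hst : s ≤ t) :
    Arc n D where
  len := t - s
  len_nonneg := sub_nonneg.mpr hst
  toFun u := γ.toFun (s + u)
  injOn u hu v hv h := by
    have := γ.injOn (x₁ := s + u) (x₂ := s + v)
      ⟨by linarith [hs.1, hu.1], by linarith [hu.2, ht.2]⟩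
      ⟨by linarith [hs.1, hv.1], by linarith [hv.2, ht.2]⟩ h
    linarith
  mem u hu := γ.mem _ ⟨by linarith [hs.1, hu.1], by linarith [hu.2, ht.2]⟩
  unitSpeed u hu v hv huv := by
    change eVariationOn (γ.toFun ∘ (s + ·)) _ = _
    rw [eVariationOn.comp_eq_of_monotoneOn _ _ (fun x _ y _ hxy => (add_le_add_iff_left s).mpr hxy),
      image_const_add_Icc, γ.unitSpeed _ ⟨by linarith [hs.1, hu.1], by linarith [hu.2, ht.2]⟩
        _ ⟨by linarith [hs.1, hv.1], by linarith [hv.2, ht.2]⟩ (by linarith)]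
    ring_nf

lemma subarc_joins (γ : Arc n D) {s t : ℝ} (hs : s ∈ Icc 0 γ.len) (ht : t ∈ Icc 0 γ.len)
    (hst : s ≤ t) : (γ.subarc hs ht hst).Joins (γ.toFun s) (γ.toFun t) :=
  ⟨congrArg γ.toFun (add_zero s), congrArg γ.toFun (add_sub_cancel s t)⟩

lemma qhLen_subarc (γ : Arc n D) {s t : ℝ} (hs : s ∈ Icc 0 γ.len) (ht : t ∈ Icc 0 γ.len)
    (hst : s ≤ t) : (γ.subarc hs ht hst).qhLen 0 (t - s) = γ.qhLen s t := by
  simp only [qhLen, subarc]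
  rw [intervalIntegral.integral_comp_add_left (fun u => 1 / distBd D (γ.toFun u)), add_zero,
    add_sub_cancel]

def reverse (γ : Arc n D) : Arc n D where
  len := γ.len
  len_nonneg := γ.len_nonneg
  toFun u := γ.toFun (γ.len - u)
  injOn u hu v hv h := by
    have := γ.injOn (x₁ := γ.len - u) (x₂ := γ.len - v)
      ⟨by linarith [hu.2], by linarith [hu.1]⟩ ⟨by linarith [hv.2], by linarith [hv.1]⟩ h
    linarith
  mem u hu := γ.mem _ ⟨by linarith [hu.2], by linarith [hu.1]⟩
  unitSpeed u hu v hv huv := by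
    change eVariationOn (γ.toFun ∘ (γ.len - ·)) _ = _
    rw [eVariationOn.comp_eq_of_antitoneOn _ _ (fun x _ y _ hxy => sub_le_sub_left hxy _),
      image_const_sub_Icc, γ.unitSpeed _ ⟨by linarith [hv.2], by linarith [hv.1]⟩
        _ ⟨by linarith [hu.2], by linarith [hu.1]⟩ (by linarith)]
    ring_nf

@[simp] lemma reverse_len (γ : Arc n D) : γ.reverse.len = γ.len := rfl

lemma reverse_joins {γ : Arc n D} {x y : EuclideanSpace ℝ (Fin n)} (h : γ.Joins x y) :
    γ.reverse.Joins y x :=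
  ⟨(congrArg γ.toFun (sub_zero γ.len)).trans h.2, (congrArg γ.toFun (sub_self γ.len)).trans h.1⟩

lemma qhLen_reverse (γ : Arc n D) (u v : ℝ) :
    γ.reverse.qhLen u v = γ.qhLen (γ.len - v) (γ.len - u) := by
  simp only [qhLen, reverse]
  rw [intervalIntegral.integral_comp_sub_left (fun u => 1 / distBd D (γ.toFun u)),
    intervalIntegral.integral_symm]

lemma IsConeArc.reverse {γ : Arc n D} {c : ℝ} (h : γ.IsConeArc c) : γ.reverse.IsConeArc c := by
  intro t (ht : t ∈ Icc 0 γ.len)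
  have := h (γ.len - t) ⟨by linarith [ht.2], by linarith [ht.1]⟩
  rwa [sub_sub_cancel, min_comm] at this

end Arc

lemma qhDist_le_qhLen_of_joins {x y : EuclideanSpace ℝ (Fin n)} {γ : Arc n D}
    (hγ : γ.Joins x y) : qhDist D x y ≤ γ.qhLen 0 γ.len :=
  csInf_le ⟨0, by rintro r ⟨γ, -, rfl⟩; exact γ.qhLen_nonneg γ.len_nonneg⟩ ⟨γ, hγ, rfl⟩

lemma Arc.qhDist_le_qhLen (γ : Arc n D) {s t : ℝ} (hs : s ∈ Icc 0 γ.len)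
    (ht : t ∈ Icc 0 γ.len) (hst : s ≤ t) : qhDist D (γ.toFun s) (γ.toFun t) ≤ γ.qhLen s t :=
  (γ.qhLen_subarc hs ht hst).le.trans' (qhDist_le_qhLen_of_joins (γ.subarc_joins hs ht hst))

lemma qhDist_comm (x y : EuclideanSpace ℝ (Fin n)) : qhDist D x y = qhDist D y x := by
  suffices h : ∀ x y : EuclideanSpace ℝ (Fin n),
      { r | ∃ γ : Arc n D, γ.Joins x y ∧ r = γ.qhLen 0 γ.len } ⊆
        { r | ∃ γ : Arc n D, γ.Joins y x ∧ r = γ.qhLen 0 γ.len } from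
    congrArg sInf ((h x y).antisymm (h y x))
  rintro x y r ⟨γ, hγ, rfl⟩
  refine ⟨γ.reverse, Arc.reverse_joins hγ, ?_⟩
  rw [γ.qhLen_reverse, Arc.reverse_len, sub_zero, sub_self]

lemma Arc.qhDist_le_qhLen_of_mem_Icc (hDo : IsOpen D) (hDu : D ≠ univ) (γ : Arc n D)
    {u v s t : ℝ} (hu : u ∈ Icc 0 γ.len) (hv : v ∈ Icc 0 γ.len) (hs : s ∈ Icc u v)
    (ht : t ∈ Icc u v) : qhDist D (γ.toFun s) (γ.toFun t) ≤ γ.qhLen u v := by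
  wlog hst : s ≤ t generalizing s t
  · rw [qhDist_comm]
    exact this ht hs (le_of_not_ge hst)
  exact (γ.qhDist_le_qhLen ⟨hu.1.trans hs.1, hs.2.trans hv.2⟩ ⟨hu.1.trans ht.1, ht.2.trans hv.2⟩
    hst).trans (γ.qhLen_le_of_Icc_subset hDo hDu hu hv hs.1 hst ht.2)

lemma intervalIntegrable_one_div_const_add {g : ℝ} (hg : 0 < g) {L : ℝ} (hL : 0 ≤ L) :
    IntervalIntegrable (fun t => 1 / (g + t)) volume 0 L :=
  (continuousOn_const.div (continuousOn_const.add continuousOn_id) fun t ht => by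
    rw [uIcc_of_le hL] at ht
    exact (add_pos_of_pos_of_nonneg hg ht.1).ne').intervalIntegrable

lemma integral_one_div_const_add {g : ℝ} (hg : 0 < g) {L : ℝ} (hL : 0 ≤ L) :
    ∫ t in (0 : ℝ)..L, 1 / (g + t) = Real.log (1 + L / g) := by
  rw [intervalIntegral.integral_comp_add_left (fun t => 1 / t), add_zero,
    integral_one_div_of_pos hg (by linarith), add_div, div_self hg.ne']

lemma Arc.log_one_add_len_div_le_qhLen (hDo : IsOpen D) (hDu : D ≠ univ) (γ : Arc n D) :
    Real.log (1 + γ.len / distBd D (γ.toFun 0)) ≤ γ.qhLen 0 γ.len := by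
  have h0 : (0 : ℝ) ∈ Icc 0 γ.len := left_mem_Icc.mpr γ.len_nonneg
  have hd0 := distBd_pos hDo hDu (γ.mem 0 h0)
  rw [← integral_one_div_const_add hd0 γ.len_nonneg]
  refine intervalIntegral.integral_mono_on γ.len_nonneg
    (intervalIntegrable_one_div_const_add hd0 γ.len_nonneg)
    (γ.intervalIntegrable_one_div_distBd hDo hDu h0 (right_mem_Icc.mpr γ.len_nonneg))
    fun t ht => one_div_le_one_div_of_le (distBd_pos hDo hDu (γ.mem t ht)) ?_
  linarith [distBd_le_add_dist (D := D) (γ.toFun t) (γ.toFun 0),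
    dist_comm (γ.toFun t) (γ.toFun 0), γ.dist_le_sub h0 ht ht.1]

lemma log_one_add_dist_div_le_qhDist (hDo : IsOpen D) (hDu : D ≠ univ)
    {x y : EuclideanSpace ℝ (Fin n)} (hx : x ∈ D) (hxy : ∃ γ : Arc n D, γ.Joins x y) :
    Real.log (1 + dist x y / distBd D x) ≤ qhDist D x y := by
  obtain ⟨γ₀, hγ₀⟩ := hxy
  refine le_csInf ⟨_, γ₀, hγ₀, rfl⟩ ?_
  rintro r ⟨γ, ⟨rfl, rfl⟩, rfl⟩
  have hdist := γ.dist_le_sub (left_mem_Icc.mpr γ.len_nonneg) (right_mem_Icc.mpr γ.len_nonneg)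
    γ.len_nonneg
  have hd0 := distBd_pos hDo hDu hx
  refine (Real.log_le_log (by positivity) ?_).trans (γ.log_one_add_len_div_le_qhLen hDo hDu)
  gcongr
  linarith

lemma dist_le_of_qhDist_le (hDo : IsOpen D) (hDu : D ≠ univ) {x y : EuclideanSpace ℝ (Fin n)}
    (hx : x ∈ D) (hxy : ∃ γ : Arc n D, γ.Joins x y) {K : ℝ} (hK : qhDist D x y ≤ K) :
    dist x y ≤ (Real.exp K - 1) * distBd D x := by
  have hd := distBd_pos hDo hDu hx
  have h : 1 + dist x y / distBd D x ≤ Real.exp K := by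
    rw [← Real.exp_log (by positivity : 0 < 1 + dist x y / distBd D x)]
    exact Real.exp_le_exp.mpr ((log_one_add_dist_div_le_qhDist hDo hDu hx hxy).trans hK)
  rw [← div_le_iff₀ hd]
  linarith

lemma Arc.qhLen_zero_half_le (hDo : IsOpen D) (hDu : D ≠ univ) {γ : Arc n D} {c : ℝ}
    (hγ : γ.IsConeArc c) :
    γ.qhLen 0 (γ.len / 2) ≤ (1 + 2 * c) * Real.log (1 + γ.len / 2 / distBd D (γ.toFun 0)) := by
  have h0 : (0 : ℝ) ∈ Icc 0 γ.len := left_mem_Icc.mpr γ.len_nonneg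
  have hhalf : 0 ≤ γ.len / 2 := by linarith [γ.len_nonneg]
  have hd0 := distBd_pos hDo hDu (γ.mem 0 h0)
  rw [← integral_one_div_const_add hd0 hhalf, ← intervalIntegral.integral_const_mul]
  refine intervalIntegral.integral_mono_on hhalf
    (γ.intervalIntegrable_one_div_distBd hDo hDu h0 ⟨hhalf, by linarith⟩)
    ((intervalIntegrable_one_div_const_add hd0 hhalf).const_mul _) fun t ht => ?_
  have ht' : t ∈ Icc 0 γ.len := ⟨ht.1, by linarith [ht.2]⟩
  have hdt := distBd_pos hDo hDu (γ.mem t ht')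
  have hcone := hγ t ht'
  rw [min_eq_left (by linarith [ht.2])] at hcone
  have hlip : distBd D (γ.toFun 0) ≤ distBd D (γ.toFun t) + t := by
    linarith [distBd_le_add_dist (D := D) (γ.toFun 0) (γ.toFun t), γ.dist_le_sub h0 ht' ht.1]
  rw [mul_one_div, div_le_div_iff₀ hdt (by linarith [ht.1])]
  linarith

lemma IsUniform.qhDist_le (hDo : IsOpen D) (hDu : D ≠ univ) {c : ℝ} (hU : IsUniform D c)
    (hc : 0 ≤ c) {x y : EuclideanSpace ℝ (Fin n)} (hx : x ∈ D) (hy : y ∈ D) {δ : ℝ} (hδ : 0 < δ)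
    (hδx : δ ≤ distBd D x) (hδy : δ ≤ distBd D y) :
    qhDist D x y ≤ 2 * (1 + 2 * c) * Real.log (1 + c * dist x y / δ) := by
  obtain ⟨γ, hγ, hcone, hlen⟩ := hU x hx y hy
  have hlog : ∀ {d : ℝ}, δ ≤ d →
      Real.log (1 + γ.len / 2 / d) ≤ Real.log (1 + c * dist x y / δ) := fun hd => by
    have := γ.len_nonneg
    have := hδ.trans_le hd
    refine Real.log_le_log (by positivity) (add_le_add_right (div_le_div₀ ?_ ?_ hδ hd) 1)
    all_goals nlinarith [dist_nonneg (x := x) (y := y)]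
  have h1 := γ.qhLen_zero_half_le hDo hDu hcone
  have h2 := γ.reverse.qhLen_zero_half_le hDo hDu hcone.reverse
  rw [γ.qhLen_reverse, Arc.reverse_len, sub_zero, sub_half, (Arc.reverse_joins hγ).1] at h2
  rw [hγ.1] at h1
  calc qhDist D x y ≤ γ.qhLen 0 γ.len := qhDist_le_qhLen_of_joins hγ
    _ = γ.qhLen 0 (γ.len / 2) + γ.qhLen (γ.len / 2) γ.len :=
      (γ.qhLen_add hDo hDu (v := γ.len / 2) (left_mem_Icc.mpr γ.len_nonneg)
        ⟨by linarith [γ.len_nonneg], by linarith [γ.len_nonneg]⟩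
        (right_mem_Icc.mpr γ.len_nonneg)).symm
    _ ≤ 2 * (1 + 2 * c) * Real.log (1 + c * dist x y / δ) := by
      nlinarith [hlog hδx, hlog hδy]

lemma IsUniform.exists_joins {c : ℝ} (hU : IsUniform D c) :
    ∀ x ∈ D, ∀ y ∈ D, ∃ γ : Arc n D, γ.Joins x y := fun x hx y hy =>
  let ⟨γ, hγ, _⟩ := hU x hx y hy
  ⟨γ, hγ⟩

lemma le_two_mul_add_of_le_add_mul_log {ρ P Q c : ℝ} (hρ : 0 ≤ ρ) (hQ : 0 ≤ Q) (hc : 0 ≤ c)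
    (h : ρ ≤ P + Q * Real.log (1 + c * ρ)) :
    ρ ≤ 2 * P + 2 * Q * Real.log (1 + 2 * Q * c) := by
  have h1 : 0 < 1 + c * ρ := by positivity
  have h2 : 0 < 1 + 2 * Q * c := by positivity
  -- `log s ≤ s - 1` at `s = (1 + c ρ) / (1 + 2 Q c)` costs at most `ρ / 2` after multiplying by `Q`
  have hlog := Real.log_le_sub_one_of_pos (div_pos h1 h2)
  rw [Real.log_div h1.ne' h2.ne', div_sub_one h2.ne'] at hlog
  have hQlog : Q * (Real.log (1 + c * ρ) - Real.log (1 + 2 * Q * c)) ≤ ρ / 2 := by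
    refine (mul_le_mul_of_nonneg_left hlog hQ).trans ?_
    rw [mul_div_assoc', div_le_div_iff₀ h2 two_pos]
    nlinarith [mul_nonneg (mul_nonneg hQ hQ) hc, mul_nonneg (mul_nonneg hQ hc) hρ]
  linarith

lemma Arc.dist_le_of_forall_qhLen_le_one (hDo : IsOpen D) (hDu : D ≠ univ) {X : Type*}
    [PseudoMetricSpace X] (γ : Arc n D) (g : ℝ → X) {u v K : ℝ} (hu : u ∈ Icc 0 γ.len)
    (hv : v ∈ Icc 0 γ.len) (huv : u ≤ v)
    (hstep : ∀ s ∈ Icc u v, ∀ t ∈ Icc u v, s ≤ t → γ.qhLen s t ≤ 1 → dist (g s) (g t) ≤ K) :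
    dist (g u) (g v) ≤ (γ.qhLen u v + 1) * K := by
  have hK : 0 ≤ K := dist_nonneg.trans
    (hstep u ⟨le_rfl, huv⟩ u ⟨le_rfl, huv⟩ le_rfl (by simp [Arc.qhLen]))
  have hmem : ∀ s ∈ Icc u v, s ∈ Icc 0 γ.len := fun s hs => ⟨hu.1.trans hs.1, hs.2.trans hv.2⟩
  -- peel off an initial piece `γ[s, w]` of quasihyperbolic length exactly `1`
  have key : ∀ m : ℕ, ∀ s ∈ Icc u v, γ.qhLen s v ≤ m + 1 → dist (g s) (g v) ≤ (m + 1) * K := by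
    intro m
    induction m with
    | zero =>
      intro s hs hsv
      simpa using hstep s hs v ⟨huv, le_rfl⟩ hs.2 (by simpa using hsv)
    | succ m ih =>
      intro s hs hsv
      by_cases hshort : γ.qhLen s v ≤ 1
      · refine (hstep s hs v ⟨huv, le_rfl⟩ hs.2 hshort).trans ?_
        push_cast
        nlinarith [(Nat.cast_nonneg m : (0 : ℝ) ≤ m)]
      · obtain ⟨w, hw, hsw⟩ : ∃ w ∈ Icc s v, γ.qhLen s w = 1 :=
          intermediate_value_Icc hs.2 (γ.continuousOn_qhLen hDo hDu (hmem s hs) hv hs.2)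
            ⟨by simp [Arc.qhLen], by linarith⟩
        have hw' : w ∈ Icc u v := ⟨hs.1.trans hw.1, hw.2⟩
        have hwv := γ.qhLen_add hDo hDu (hmem s hs) (hmem w hw') hv
        have h1 := hstep s hs w hw' hw.1 hsw.le
        have h2 := ih w hw' (by push_cast at hsv; linarith)
        push_cast
        linarith [dist_triangle (g s) (g w) (g v)]
  refine (key ⌊γ.qhLen u v⌋₊ u ⟨le_rfl, huv⟩ (Nat.lt_floor_add_one _).le).trans ?_
  gcongr
  exact Nat.floor_le (γ.qhLen_nonneg huv)

namespace IsCQH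

variable {f : EuclideanSpace ℝ (Fin n) → EuclideanSpace ℝ (Fin n)} {M C : ℝ}

lemma qhDist_le (hf : IsCQH D D' f M C) (hM : 0 < M) {x y : EuclideanSpace ℝ (Fin n)}
    (hx : x ∈ D) (hy : y ∈ D) : qhDist D x y ≤ M * qhDist D' (f x) (f y) + C := by
  have h := (hf.2.2 x hx y hy).1
  rw [div_le_iff₀ hM] at h
  linarith

lemma dist_image_le (hf : IsCQH D D' f M C) (hM : 0 ≤ M) (hD'o : IsOpen D') (hD'u : D' ≠ univ)
    (hD'join : ∀ x ∈ D', ∀ y ∈ D', ∃ γ : Arc n D', γ.Joins x y) {x y : EuclideanSpace ℝ (Fin n)}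
    (hx : x ∈ D) (hy : y ∈ D) {K : ℝ} (hK : qhDist D x y ≤ K) :
    dist (f x) (f y) ≤ (Real.exp (M * K + C) - 1) * distBd D' (f x) := by
  have hfx := hf.2.1.mapsTo hx
  refine dist_le_of_qhDist_le hD'o hD'u hfx (hD'join _ hfx _ (hf.2.1.mapsTo hy)) ?_
  linarith [(hf.2.2 x hx y hy).2, mul_le_mul_of_nonneg_left hK hM]

lemma dist_image_le_of_mem_Icc (hf : IsCQH D D' f M C) (hM : 0 ≤ M) (hDo : IsOpen D)
    (hDu : D ≠ univ) (hD'o : IsOpen D') (hD'u : D' ≠ univ)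
    (hD'join : ∀ x ∈ D', ∀ y ∈ D', ∃ γ : Arc n D', γ.Joins x y) (β : Arc n D) {u v s t K : ℝ}
    (hu : u ∈ Icc 0 β.len) (hv : v ∈ Icc 0 β.len) (hK : β.qhLen u v ≤ K) (hs : s ∈ Icc u v)
    (ht : t ∈ Icc u v) :
    dist (f (β.toFun s)) (f (β.toFun t)) ≤
      (Real.exp (M * K + C) - 1) * distBd D' (f (β.toFun t)) := by
  rw [dist_comm]
  exact hf.dist_image_le hM hD'o hD'u hD'join (β.mem t ⟨hu.1.trans ht.1, ht.2.trans hv.2⟩)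
    (β.mem s ⟨hu.1.trans hs.1, hs.2.trans hv.2⟩)
    ((β.qhDist_le_qhLen_of_mem_Icc hDo hDu hu hv ht hs).trans hK)

end IsCQH

namespace Lemma32

/-- `|f x - f y| ≤ stepConst M C · d'(f p)` whenever `x, y ∈ β[p, q]` and `ℓ_k(β[x, y]) ≤ 1`. -/
def stepConst (M C : ℝ) : ℝ := 2 * (Real.exp (M + C) - 1)

/-- `ρ = |f p - f q| / d'(f p)` satisfies `ρ ≤ ratioP + ratioQ · log (1 + c ρ)`. -/
def ratioP (a M C : ℝ) : ℝ := (4 * a ^ 2 * (C + 1) + 1) * stepConst M C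

def ratioQ (a c M C : ℝ) : ℝ := 8 * a ^ 2 * M * (1 + 2 * c) * stepConst M C

def ratioBound (a c M C : ℝ) : ℝ :=
  2 * ratioP a M C + 2 * ratioQ a c M C * Real.log (1 + 2 * ratioQ a c M C * c)

def arcBound (a c M C : ℝ) : ℝ :=
  4 * a ^ 2 * (M * (2 * (1 + 2 * c) * Real.log (1 + c * ratioBound a c M C)) + C + 1)

def a₂ (a c M C : ℝ) : ℝ := Real.exp (M * arcBound a c M C + C) * (1 + ratioBound a c M C)

variable {f : EuclideanSpace ℝ (Fin n) → EuclideanSpace ℝ (Fin n)} {a c M C : ℝ} {β : Arc n D}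
  {tp tq : ℝ}

lemma stepConst_nonneg (hM : 0 ≤ M) (hC : 0 ≤ C) : 0 ≤ stepConst M C := by
  unfold stepConst
  linarith [Real.add_one_le_exp (M + C)]

lemma ratioQ_nonneg (hc : 0 ≤ c) (hM : 0 ≤ M) (hC : 0 ≤ C) (a : ℝ) : 0 ≤ ratioQ a c M C := by
  unfold ratioQ
  have := stepConst_nonneg hM hC
  positivity

lemma ratioBound_nonneg (hc : 0 ≤ c) (hM : 0 ≤ M) (hC : 0 ≤ C) (a : ℝ) :
    0 ≤ ratioBound a c M C := by
  unfold ratioBound ratioP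
  have := stepConst_nonneg hM hC
  have := ratioQ_nonneg hc hM hC a
  have := Real.log_nonneg (by nlinarith : 1 ≤ 1 + 2 * ratioQ a c M C * c)
  positivity

lemma a₂_pos (hc : 0 ≤ c) (hM : 0 ≤ M) (hC : 0 ≤ C) (a : ℝ) : 0 < a₂ a c M C := by
  unfold a₂
  have := ratioBound_nonneg hc hM hC a
  positivity

lemma qhLen_le_of_isCQH (hf : IsCQH D D' f M C) (hM : 0 < M) (htp : tp ∈ Icc 0 β.len)
    (htq : tq ∈ Icc 0 β.len)
    (hβ : β.qhLen tp tq ≤ 4 * a ^ 2 * qhDist D (β.toFun tp) (β.toFun tq) + 4 * a ^ 2) :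
    β.qhLen tp tq ≤ 4 * a ^ 2 * (M * qhDist D' (f (β.toFun tp)) (f (β.toFun tq)) + C + 1) := by
  have := hf.qhDist_le hM (β.mem tp htp) (β.mem tq htq)
  nlinarith [sq_nonneg a]

lemma dist_le_ratioBound_mul (hDo : IsOpen D) (hDu : D ≠ univ) (hD'o : IsOpen D')
    (hD'u : D' ≠ univ) (hU : IsUniform D' c) (hc : 0 ≤ c) (hM : 0 < M) (hC : 0 ≤ C)
    (hf : IsCQH D D' f M C) (htp : tp ∈ Icc 0 β.len) (htq : tq ∈ Icc 0 β.len) (hpq : tp ≤ tq)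
    (hβ : β.qhLen tp tq ≤ 4 * a ^ 2 * qhDist D (β.toFun tp) (β.toFun tq) + 4 * a ^ 2)
    (hdq : distBd D' (f (β.toFun tq)) = 2 * distBd D' (f (β.toFun tp)))
    (hle : ∀ t ∈ Icc tp tq, distBd D' (f (β.toFun t)) ≤ 2 * distBd D' (f (β.toFun tp))) :
    dist (f (β.toFun tp)) (f (β.toFun tq)) ≤ ratioBound a c M C * distBd D' (f (β.toFun tp)) := by
  set d₀ := distBd D' (f (β.toFun tp))
  have hmem : ∀ s ∈ Icc tp tq, s ∈ Icc 0 β.len := fun s hs =>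
    ⟨htp.1.trans hs.1, hs.2.trans htq.2⟩
  have hfp := hf.2.1.mapsTo (β.mem tp htp)
  have hd₀ : 0 < d₀ := distBd_pos hD'o hD'u hfp
  have hstep : ∀ s ∈ Icc tp tq, ∀ t ∈ Icc tp tq, s ≤ t → β.qhLen s t ≤ 1 →
      dist (f (β.toFun s)) (f (β.toFun t)) ≤ stepConst M C * d₀ := by
    intro s hs t ht hst hst1
    have := hf.dist_image_le hM.le hD'o hD'u hU.exists_joins (β.mem s (hmem s hs))
      (β.mem t (hmem t ht)) ((β.qhDist_le_qhLen (hmem s hs) (hmem t ht) hst).trans hst1)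
    rw [mul_one] at this
    unfold stepConst
    nlinarith [hle s hs, Real.add_one_le_exp (M + C)]
  have hchain := β.dist_le_of_forall_qhLen_le_one hDo hDu (f ∘ β.toFun) htp htq hpq hstep
  have hT := qhLen_le_of_isCQH hf hM htp htq hβ
  have hk := hU.qhDist_le hD'o hD'u hc hfp (hf.2.1.mapsTo (β.mem tq htq)) hd₀ le_rfl
    (by linarith)
  set ρ := dist (f (β.toFun tp)) (f (β.toFun tq)) / d₀
  rw [mul_div_assoc] at hk
  rw [← div_le_iff₀ hd₀]
  refine le_two_mul_add_of_le_add_mul_log (by positivity) (ratioQ_nonneg hc hM.le hC a) hc ?_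
  have hMk := mul_le_mul_of_nonneg_left hk (by positivity : 0 ≤ 4 * a ^ 2 * M)
  calc ρ ≤ (β.qhLen tp tq + 1) * stepConst M C := by
        rw [div_le_iff₀ hd₀, mul_assoc]
        exact hchain
    _ ≤ (4 * a ^ 2 * (M * (2 * (1 + 2 * c) * Real.log (1 + c * ρ)) + C + 1) + 1)
        * stepConst M C := by
      gcongr
      · exact stepConst_nonneg hM.le hC
      · linarith
    _ = ratioP a M C + ratioQ a c M C * Real.log (1 + c * ρ) := by
      unfold ratioP ratioQ
      ring

lemma qhLen_le_arcBound (hD'o : IsOpen D') (hD'u : D' ≠ univ) (hU : IsUniform D' c)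
    (hc : 0 ≤ c) (hM : 0 < M) (hf : IsCQH D D' f M C) (htp : tp ∈ Icc 0 β.len)
    (htq : tq ∈ Icc 0 β.len)
    (hβ : β.qhLen tp tq ≤ 4 * a ^ 2 * qhDist D (β.toFun tp) (β.toFun tq) + 4 * a ^ 2)
    (hdq : distBd D' (f (β.toFun tq)) = 2 * distBd D' (f (β.toFun tp)))
    (hr : dist (f (β.toFun tp)) (f (β.toFun tq)) ≤
      ratioBound a c M C * distBd D' (f (β.toFun tp))) :
    β.qhLen tp tq ≤ arcBound a c M C := by
  have hfp := hf.2.1.mapsTo (β.mem tp htp)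
  have hd₀ := distBd_pos hD'o hD'u hfp
  have hk := hU.qhDist_le hD'o hD'u hc hfp (hf.2.1.mapsTo (β.mem tq htq)) hd₀ le_rfl
    (by linarith)
  rw [mul_div_assoc] at hk
  refine (qhLen_le_of_isCQH hf hM htp htq hβ).trans ?_
  unfold arcBound
  gcongr
  refine hk.trans ?_
  gcongr
  exact (div_le_iff₀ hd₀).mpr hr

end Lemma32

end

theorem lemma_3_2_general
    (a c M C : ℝ) (hc : 1 ≤ c) (hM : 1 ≤ M) (hC : 0 ≤ C) :
    ∃ a₂ > 0, ∀ (n : ℕ), 2 ≤ n →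
      ∀ (D D' : Set (EuclideanSpace ℝ (Fin n)))
        (f : EuclideanSpace ℝ (Fin n) → EuclideanSpace ℝ (Fin n)),
        IsProperDomain D → IsProperDomain D' → IsUniform D' c →
        IsCQH D D' f M C →
        ∀ (β : Arc n D),
          (∀ s ∈ Icc (0:ℝ) β.len, ∀ t ∈ Icc (0:ℝ) β.len, s ≤ t →
            β.qhLen s t ≤ 4 * a ^ 2 * qhDist D (β.toFun s) (β.toFun t) + 4 * a ^ 2) →
          ∀ tp ∈ Icc (0:ℝ) β.len, ∀ tq ∈ Icc (0:ℝ) β.len, tp ≤ tq →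
            distBd D' (f (β.toFun tq)) = 2 * distBd D' (f (β.toFun tp)) →
            (∀ t ∈ Icc tp tq, distBd D' (f (β.toFun t)) ≤ 2 * distBd D' (f (β.toFun tp))) →
            ∀ t ∈ Icc tp tq,
              distBd D' (f (β.toFun tq)) ≤ a₂ * distBd D' (f (β.toFun t)) ∧
              dist (f (β.toFun tq)) (f (β.toFun tp)) ≤ a₂ * distBd D' (f (β.toFun t)) ∧
              max (dist (f (β.toFun tp)) (f (β.toFun t)))
                  (dist (f (β.toFun tq)) (f (β.toFun t)))
                ≤ a₂ * distBd D' (f (β.toFun t)) := by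
  have hc₀ : 0 ≤ c := by linarith
  have hM₀ : 0 < M := by linarith
  refine ⟨Lemma32.a₂ a c M C, Lemma32.a₂_pos hc₀ hM₀.le hC a, ?_⟩
  rintro n - D D' f ⟨hDo, -, hDu⟩ ⟨hD'o, -, hD'u⟩ hU hf β hβ tp htp tq htq hpq hdq hle t ht
  have hβpq := hβ tp htp tq htq hpq
  have hr := Lemma32.dist_le_ratioBound_mul hDo hDu hD'o hD'u hU hc₀ hM₀ hC hf htp htq hpq hβpq
    hdq hle
  have hT := Lemma32.qhLen_le_arcBound hD'o hD'u hU hc₀ hM₀ hf htp htq hβpq hdq hr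
  have hzp := hf.dist_image_le_of_mem_Icc hM₀.le hDo hDu hD'o hD'u hU.exists_joins β htp htq hT
    ⟨le_rfl, hpq⟩ ht
  have hzq := hf.dist_image_le_of_mem_Icc hM₀.le hDo hDu hD'o hD'u hU.exists_joins β htp htq hT
    ⟨hpq, le_rfl⟩ ht
  set E := Real.exp (M * Lemma32.arcBound a c M C + C)
  have hqz : distBd D' (f (β.toFun tq)) ≤ E * distBd D' (f (β.toFun t)) := by
    linarith [distBd_le_add_dist (D := D') (f (β.toFun tq)) (f (β.toFun t))]
  have hρ := Lemma32.ratioBound_nonneg hc₀ hM₀.le hC a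
  have hdz := distBd_pos hD'o hD'u
    (hf.2.1.mapsTo (β.mem t ⟨htp.1.trans ht.1, ht.2.trans htq.2⟩))
  have hE : 0 ≤ E * distBd D' (f (β.toFun t)) := by positivity
  have hEρ : 0 ≤ E * Lemma32.ratioBound a c M C * distBd D' (f (β.toFun t)) := by positivity
  have hρq := mul_le_mul_of_nonneg_left hqz hρ
  rw [hdq] at hρq
  rw [dist_comm] at hr
  unfold Lemma32.a₂
  refine ⟨by linarith, by linarith, max_le (by linarith) (by linarith)⟩

/-- **Lemma 3.2.** Let `D ⊊ ℝⁿ` (`n ≥ 2`) be a domain, `D' ⊊ ℝⁿ` a `c`-uniform domain, and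
`f : D → D'` an `(M,C)`-CQH homeomorphism.  Let `β` be an arc in `D` satisfying
`ℓ_k(β[s₁,s₂]) ≤ 4a²·k_D(s₁,s₂) + 4a²` for all `s₁, s₂ ∈ β`, and let `p = β(tp)`,
`q = β(tq)` with `tp ≤ tq`, `d'(f q) = 2 d'(f p)` and `d'(f z) ≤ 2 d'(f p)` on `β[p,q]`.
Then there is `a₂ > 0`, depending only on `a, c, M, C`, bounding the stated quantities. -/
theorem lemma_3_2
    (a c M C : ℝ) (ha : 1 ≤ a) (hc : 1 ≤ c) (hM : 1 ≤ M) (hC : 0 ≤ C) :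
    ∃ a₂ > 0, ∀ (n : ℕ), 2 ≤ n →
      ∀ (D D' : Set (EuclideanSpace ℝ (Fin n)))
        (f : EuclideanSpace ℝ (Fin n) → EuclideanSpace ℝ (Fin n)),
        IsProperDomain D → IsProperDomain D' → IsUniform D' c →
        IsCQH D D' f M C →
        ∀ (β : Arc n D),
          (∀ s ∈ Icc (0:ℝ) β.len, ∀ t ∈ Icc (0:ℝ) β.len, s ≤ t →
            β.qhLen s t ≤ 4 * a ^ 2 * qhDist D (β.toFun s) (β.toFun t) + 4 * a ^ 2) →
          ∀ tp ∈ Icc (0:ℝ) β.len, ∀ tq ∈ Icc (0:ℝ) β.len, tp ≤ tq →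
            distBd D' (f (β.toFun tq)) = 2 * distBd D' (f (β.toFun tp)) →
            (∀ t ∈ Icc tp tq, distBd D' (f (β.toFun t)) ≤ 2 * distBd D' (f (β.toFun tp))) →
            ∀ t ∈ Icc tp tq,
              distBd D' (f (β.toFun tq)) ≤ a₂ * distBd D' (f (β.toFun t)) ∧
              dist (f (β.toFun tq)) (f (β.toFun tp)) ≤ a₂ * distBd D' (f (β.toFun t)) ∧
              max (dist (f (β.toFun tp)) (f (β.toFun t)))
                  (dist (f (β.toFun tq)) (f (β.toFun t)))
                ≤ a₂ * distBd D' (f (β.toFun t)) :=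
  lemma_3_2_general a c M C hc hM hC
end
end

section
/- Let n ≥ 2, a ≥ 1, let D ⊊ ℝⁿ be a domain, let α be an a-cone arc in D joining x and y, and let s₀ ∈ α bisect α, i.e. ℓ(α[x,s₀]) = ℓ(α[s₀,y]). Then for every u ∈ α[x,s₀] and every z ∈ α[u,s₀], one has d(z) ≥ (2·ℓ(α[u,z]) + d(u))/(4a); and symmetrically, for every v ∈ α[s₀,y] and every z ∈ α[s₀,v], one has d(z) ≥ (2·ℓ(α[v,z]) + d(v))/(4a). (This is Lemma 3.12.) -/
open Set Metric MeasureTheory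

noncomputable section

/-! Up to the bisecting point, the cone condition reads `ℓ(α[x,z]) ≤ a·d(z)`, and `d` is
1-Lipschitz along the unit-speed arc, so
`2ℓ(α[u,z]) + d(u) ≤ 3ℓ(α[u,z]) + d(z) ≤ 3ℓ(α[x,z]) + d(z) ≤ 4a·d(z)`. -/

namespace Arc

variable {n : ℕ} {D : Set (EuclideanSpace ℝ (Fin n))} (γ : Arc n D)

lemma dist_toFun_le_of_le {s t : ℝ} (hs : s ∈ Icc 0 γ.len) (ht : t ∈ Icc 0 γ.len)
    (hst : s ≤ t) : dist (γ.toFun s) (γ.toFun t) ≤ t - s := by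
  have h := eVariationOn.edist_le γ.toFun (s := Icc s t) ⟨le_rfl, hst⟩ ⟨hst, le_rfl⟩
  rwa [γ.unitSpeed s hs t ht hst, edist_dist, ENNReal.ofReal_le_ofReal_iff (by linarith)] at h

lemma dist_toFun_le {s t : ℝ} (hs : s ∈ Icc 0 γ.len) (ht : t ∈ Icc 0 γ.len) :
    dist (γ.toFun s) (γ.toFun t) ≤ |t - s| := by
  rcases le_total s t with hst | hts
  · exact (γ.dist_toFun_le_of_le hs ht hst).trans (le_abs_self _)
  · rw [dist_comm, abs_sub_comm]
    exact (γ.dist_toFun_le_of_le ht hs hts).trans (le_abs_self _)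

lemma distBd_toFun_le_add {s t : ℝ} (hs : s ∈ Icc 0 γ.len) (ht : t ∈ Icc 0 γ.len) :
    distBd D (γ.toFun s) ≤ distBd D (γ.toFun t) + |t - s| :=
  infDist_le_infDist_add_dist.trans (add_le_add_right (γ.dist_toFun_le hs ht) _)

variable {γ} {a : ℝ}

lemma IsConeArc.le_of_le_half (h : γ.IsConeArc a) {t : ℝ} (ht : t ∈ Icc 0 γ.len)
    (hhalf : t ≤ γ.len - t) : t ≤ a * distBd D (γ.toFun t) := by
  simpa only [min_eq_left hhalf] using h t ht

lemma IsConeArc.sub_le_of_half_le (h : γ.IsConeArc a) {t : ℝ} (ht : t ∈ Icc 0 γ.len)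
    (hhalf : γ.len - t ≤ t) : γ.len - t ≤ a * distBd D (γ.toFun t) := by
  simpa only [min_eq_right hhalf] using h t ht

end Arc

lemma div_four_mul_le_of_cone {a ℓ c du dt : ℝ} (ha : 1 ≤ a) (hdt : 0 ≤ dt) (hℓc : ℓ ≤ c)
    (hc : c ≤ a * dt) (hdu : du ≤ dt + ℓ) : (2 * ℓ + du) / (4 * a) ≤ dt := by
  rw [div_le_iff₀ (by linarith)]
  calc 2 * ℓ + du ≤ 3 * c + dt := by linarith
    _ ≤ 3 * (a * dt) + a * dt := by nlinarith
    _ = dt * (4 * a) := by ring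

theorem lemma_3_12_general (n : ℕ) (a : ℝ) (ha : 1 ≤ a)
    (D : Set (EuclideanSpace ℝ (Fin n)))
    (α : Arc n D)
    (hcone : α.IsConeArc a)
    (t₀ : ℝ) (hbis : t₀ = α.len - t₀) :
    (∀ u ∈ Icc (0:ℝ) t₀, ∀ t ∈ Icc u t₀,
      (2 * (t - u) + distBd D (α.toFun u)) / (4 * a) ≤ distBd D (α.toFun t)) ∧
    (∀ v ∈ Icc t₀ α.len, ∀ t ∈ Icc t₀ v,
      (2 * (v - t) + distBd D (α.toFun v)) / (4 * a) ≤ distBd D (α.toFun t)) := by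
  have hlen := α.len_nonneg
  refine ⟨fun u hu t ht => ?_, fun v hv t ht => ?_⟩
  · have htI : t ∈ Icc 0 α.len := ⟨hu.1.trans ht.1, by linarith [ht.2]⟩
    have hdu := α.distBd_toFun_le_add ⟨hu.1, by linarith [hu.2]⟩ htI
    rw [abs_of_nonneg (sub_nonneg.2 ht.1)] at hdu
    exact div_four_mul_le_of_cone ha infDist_nonneg (by linarith [hu.1])
      (hcone.le_of_le_half htI (by linarith [ht.2])) hdu
  · have htI : t ∈ Icc 0 α.len := ⟨by linarith [ht.1], ht.2.trans hv.2⟩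
    have hdv := α.distBd_toFun_le_add ⟨by linarith [hv.1], hv.2⟩ htI
    rw [abs_of_nonpos (by linarith [ht.2]), neg_sub] at hdv
    exact div_four_mul_le_of_cone ha infDist_nonneg (by linarith [hv.2])
      (hcone.sub_le_of_half_le htI (by linarith [ht.1])) hdv

/-- **Lemma 3.12.** Let `D ⊊ ℝⁿ` (`n ≥ 2`) be a domain, `α` an `a`-cone arc (`a ≥ 1`)
joining `x` and `y` in `D`, and let `s₀ = α(t₀)` bisect `α`.  Then for every
`u ∈ α[x,s₀]` and every `z ∈ α[u,s₀]` one has `d(z) ≥ (2·ℓ(α[u,z]) + d(u))/(4a)`, and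
symmetrically on the other half. -/
theorem lemma_3_12 (n : ℕ) (hn : 2 ≤ n) (a : ℝ) (ha : 1 ≤ a)
    (D : Set (EuclideanSpace ℝ (Fin n))) (hD : IsProperDomain D)
    (α : Arc n D) (x y : EuclideanSpace ℝ (Fin n)) (hxy : α.Joins x y)
    (hcone : α.IsConeArc a)
    (t₀ : ℝ) (ht₀ : t₀ ∈ Icc (0:ℝ) α.len) (hbis : t₀ = α.len - t₀) :
    (∀ u ∈ Icc (0:ℝ) t₀, ∀ t ∈ Icc u t₀,
      (2 * (t - u) + distBd D (α.toFun u)) / (4 * a) ≤ distBd D (α.toFun t)) ∧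
    (∀ v ∈ Icc t₀ α.len, ∀ t ∈ Icc t₀ v,
      (2 * (v - t) + distBd D (α.toFun v)) / (4 * a) ≤ distBd D (α.toFun t)) :=
  lemma_3_12_general n a ha D α hcone t₀ hbis
end
end

section
/- Let n ≥ 2, let D ⊊ ℝⁿ be a domain, let γ be a rectifiable arc in D, let κ > 0, and let y₁, y₂, …, y_{m+1} be points occurring in this order along γ such that: (i) d(y_{j+1}) ≥ 2·d(y_j) for every j ∈ {1, …, m−1}; (ii) ℓ(γ[y_i, y_{i+1}]) ≤ 2κ·d(y_i) for every i ∈ {1, …, m}; and (iii) d(y_i) ≤ e^{κ}·d(z) for every i ∈ {1, …, m} and every z ∈ γ[y_i, y_{i+1}]. Then for every i ∈ {1, …, m} and every y ∈ γ[y_i, y_{i+1}], one has ℓ(γ[y₁, y]) ≤ 4κ·e^{κ}·d(y). (This is the summation argument (3.39)–(3.41) concluding the proof of Theorem 1.4.) -/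
/-! Along the chain the distances to the boundary at least double, so the lengths
`ℓ(γ[y_j, y_{j+1}]) ≤ 2κ d(y_j)` sum to a geometric series dominated by its last term:
`ℓ(γ[y₁, y_i]) ≤ 2κ d(y_i)`. One more step gives `ℓ(γ[y₁, y]) ≤ 4κ d(y_i)` for
`y ∈ γ[y_i, y_{i+1}]`, and `d(y_i) ≤ e^κ d(y)` finishes. -/

open Set Metric MeasureTheory

noncomputable section

theorem sub_le_mul_of_step_le_of_two_mul_le {a b : ℕ → ℝ} {c : ℝ} {m : ℕ}
    (hc : 0 ≤ c) (hb : 0 ≤ b 0)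
    (hstep : ∀ i < m, a (i + 1) - a i ≤ c * b i)
    (hdouble : ∀ i, i + 1 < m → 2 * b i ≤ b (i + 1)) :
    ∀ i < m, a i - a 0 ≤ c * b i := by
  intro i
  induction i with
  | zero => intro _; simpa using mul_nonneg hc hb
  | succ i ih =>
    intro hi
    calc a (i + 1) - a 0 = (a (i + 1) - a i) + (a i - a 0) := by ring
      _ ≤ c * b i + c * b i := add_le_add (hstep i (by omega)) (ih (by omega))
      _ = c * (2 * b i) := by ring
      _ ≤ c * b (i + 1) := mul_le_mul_of_nonneg_left (hdouble i hi) hc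

theorem summation_argument_general (n : ℕ)
    (D : Set (EuclideanSpace ℝ (Fin n)))
    (γ : Arc n D) (κ : ℝ) (hκ : 0 < κ)
    (m : ℕ) (t : ℕ → ℝ)
    (hdouble : ∀ i, i + 1 < m →
      2 * distBd D (γ.toFun (t i)) ≤ distBd D (γ.toFun (t (i + 1))))
    (hlen : ∀ i < m, t (i + 1) - t i ≤ 2 * κ * distBd D (γ.toFun (t i)))
    (hcomp : ∀ i < m, ∀ s ∈ Icc (t i) (t (i + 1)),
      distBd D (γ.toFun (t i)) ≤ Real.exp κ * distBd D (γ.toFun s)) :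
    ∀ i < m, ∀ s ∈ Icc (t i) (t (i + 1)),
      s - t 0 ≤ 4 * κ * Real.exp κ * distBd D (γ.toFun s) := by
  intro i hi s hs
  have hchain : t i - t 0 ≤ 2 * κ * distBd D (γ.toFun (t i)) :=
    sub_le_mul_of_step_le_of_two_mul_le (by positivity) infDist_nonneg hlen hdouble i hi
  calc s - t 0 = (s - t i) + (t i - t 0) := by ring
    _ ≤ 2 * κ * distBd D (γ.toFun (t i)) + 2 * κ * distBd D (γ.toFun (t i)) :=
        add_le_add ((sub_le_sub_right hs.2 _).trans (hlen i hi)) hchain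
    _ = 4 * κ * distBd D (γ.toFun (t i)) := by ring
    _ ≤ 4 * κ * (Real.exp κ * distBd D (γ.toFun s)) := by gcongr; exact hcomp i hi s hs
    _ = 4 * κ * Real.exp κ * distBd D (γ.toFun s) := by ring

/-- **Summation argument (3.39)–(3.41).** Let `D ⊊ ℝⁿ` (`n ≥ 2`) be a domain, `γ` a
rectifiable arc in `D`, `κ > 0`, and let `γ(t 0), γ(t 1), …, γ(t m)` be points in order
along `γ` (these are `y₁, …, y_{m+1}`) such that: (i) `d(y_{j+1}) ≥ 2 d(y_j)` for
`j ∈ {1,…,m−1}`; (ii) `ℓ(γ[y_i, y_{i+1}]) ≤ 2κ d(y_i)` for `i ∈ {1,…,m}`; and (iii)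
`d(y_i) ≤ e^κ d(z)` for every `z ∈ γ[y_i, y_{i+1}]`, `i ∈ {1,…,m}`.  Then for every
`i ∈ {1,…,m}` and every `y ∈ γ[y_i, y_{i+1}]` one has `ℓ(γ[y₁, y]) ≤ 4κ e^κ d(y)`. -/
theorem summation_argument (n : ℕ) (hn : 2 ≤ n)
    (D : Set (EuclideanSpace ℝ (Fin n))) (hD : IsProperDomain D)
    (γ : Arc n D) (κ : ℝ) (hκ : 0 < κ)
    (m : ℕ) (t : ℕ → ℝ)
    (hmem : ∀ i ≤ m, t i ∈ Icc (0:ℝ) γ.len)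
    (hmono : ∀ i < m, t i ≤ t (i + 1))
    (hdouble : ∀ i, i + 1 < m →
      2 * distBd D (γ.toFun (t i)) ≤ distBd D (γ.toFun (t (i + 1))))
    (hlen : ∀ i < m, t (i + 1) - t i ≤ 2 * κ * distBd D (γ.toFun (t i)))
    (hcomp : ∀ i < m, ∀ s ∈ Icc (t i) (t (i + 1)),
      distBd D (γ.toFun (t i)) ≤ Real.exp κ * distBd D (γ.toFun s)) :
    ∀ i < m, ∀ s ∈ Icc (t i) (t (i + 1)),
      s - t 0 ≤ 4 * κ * Real.exp κ * distBd D (γ.toFun s) :=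
  summation_argument_general n D γ κ hκ m t hdouble hlen hcomp
end
end
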